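/- arXiv:2011.04721 — 2 statements merged into one kernel-verified Lean document; each statement's English description precedes it below -/
import Mathlib

section
/- Let f : ℝⁿ → ℝ be differentiable and m-strongly convex (m > 0) with minimizer x_* and minimum value f_* = f(x_*). Let ρ ≥ 0, and let 0 < t_min ≤ t_max with t_min < 2/m. Suppose (x_k) and (g_k) satisfy x_{k+1} = x_k − t_k g_k, where ‖g_k − ∇f(x_k)‖ ≤ ρ, t_k ∈ [t_min, t_max], and the approximate Armijo condition f(x_k − t_k g_k) ≤ f(x_k) − (t_k/2)‖g_k‖² holds for every k. Then for all k ≥ 0, f(x_k) − f_* ≤ (1 − m t_min/2)^k (f(x_0) − f_*) + ρ² t_max/(m t_min). -/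
open scoped RealInnerProductSpace

/-!
Strong convexity gives the Polyak–Łojasiewicz inequality `2m (f x - f_*) ≤ ‖∇f x‖²`. Since
`‖∇f x‖² ≤ 2‖g‖² + 2ρ²`, the approximate gradient satisfies `‖g‖² ≥ m (f x - f_*) - ρ²`, and the
Armijo condition turns this into the contraction `e_{k+1} ≤ (1 - m t_min/2) e_k + ρ² t_max/2` of the
optimality gap `e_k = f(x_k) - f_*`, whose fixed point is `ρ² t_max/(m t_min)`.
-/

theorem ConvexOn.add_fderiv_sub_le {E : Type*} [NormedAddCommGroup E] [NormedSpace ℝ E]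
    {h : E → ℝ} {h' : E →L[ℝ] ℝ} {x : E} (hconv : ConvexOn ℝ Set.univ h)
    (hh : HasFDerivAt h h' x) (y : E) : h x + h' (y - x) ≤ h y := by
  set L : ℝ →ᵃ[ℝ] E := AffineMap.lineMap x y
  have hline : ConvexOn ℝ Set.univ (h ∘ L) := hconv.comp_affineMap L
  have hderiv : HasDerivAt (h ∘ L) (h' (y - x)) 0 := by
    have hhL : HasFDerivAt h h' (L 0) := by simpa [L] using hh
    simpa using hhL.comp_hasDerivAt (0 : ℝ) AffineMap.hasDerivAt_lineMap
  have := hline.le_slope_of_hasDerivAt (Set.mem_univ (0 : ℝ)) (Set.mem_univ 1) zero_lt_one hderiv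
  simp only [slope_def_field, Function.comp_apply, AffineMap.lineMap_apply_one,
    AffineMap.lineMap_apply_zero, sub_zero, div_one, L] at this
  linarith

section StronglyConvex

variable {E : Type*} [NormedAddCommGroup E] [InnerProductSpace ℝ E] [CompleteSpace E]
  {f : E → ℝ} {m : ℝ}

theorem add_inner_gradient_add_le_of_convexOn_sub_norm_sq
    (hconv : ConvexOn ℝ Set.univ (fun y => f y - m / 2 * ‖y‖ ^ 2)) {x : E}
    (hf : DifferentiableAt ℝ f x) (y : E) :
    f x + ⟪gradient f x, y - x⟫ + m / 2 * ‖y - x‖ ^ 2 ≤ f y := by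
  have hderiv := hf.hasGradientAt.hasFDerivAt.sub
    ((hasStrictFDerivAt_norm_sq x).hasFDerivAt.const_mul (m / 2))
  have := hconv.add_fderiv_sub_le hderiv y
  have hexpand : ‖y‖ ^ 2 = ‖x‖ ^ 2 + 2 * ⟪x, y - x⟫ + ‖y - x‖ ^ 2 := by
    rw [← norm_add_sq_real, add_sub_cancel]
  simp only [sub_apply, smul_apply,
    InnerProductSpace.toDual_apply_apply, innerSL_apply_apply, smul_eq_mul, nsmul_eq_mul,
    Nat.cast_ofNat] at this
  rw [hexpand] at this
  linarith

theorem two_mul_sub_le_norm_gradient_sq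
    (hconv : ConvexOn ℝ Set.univ (fun y => f y - m / 2 * ‖y‖ ^ 2)) (hm : 0 < m) {x : E}
    (hf : DifferentiableAt ℝ f x) (y : E) :
    2 * m * (f x - f y) ≤ ‖gradient f x‖ ^ 2 := by
  have hlower := add_inner_gradient_add_le_of_convexOn_sub_norm_sq hconv hf y
  have hcs := real_inner_le_norm (gradient f x) (x - y)
  rw [← neg_sub x y, inner_neg_right, norm_neg] at hlower
  nlinarith [sq_nonneg (‖gradient f x‖ - m * ‖x - y‖)]

end StronglyConvex

theorem armijo_step_sub_le {E : Type*} [NormedAddCommGroup E] [InnerProductSpace ℝ E]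
    [CompleteSpace E] {f : E → ℝ} {m ρ tmin tmax t fstar : ℝ} {x g : E}
    (hm : 0 ≤ m) (htmin : 0 ≤ tmin) (ht : t ∈ Set.Icc tmin tmax) (hgap : fstar ≤ f x)
    (hPL : 2 * m * (f x - fstar) ≤ ‖gradient f x‖ ^ 2) (hg : ‖g - gradient f x‖ ≤ ρ)
    (harmijo : f (x - t • g) ≤ f x - t / 2 * ‖g‖ ^ 2) :
    f (x - t • g) - fstar ≤ (1 - m * tmin / 2) * (f x - fstar) + ρ ^ 2 * tmax / 2 := by
  obtain ⟨htl, htu⟩ := ht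
  have hgrad : ‖gradient f x‖ ≤ ‖g‖ + ρ := by
    have := norm_le_norm_add_norm_sub' (gradient f x) g
    rw [norm_sub_rev] at this
    linarith
  have hg_sq : m * (f x - fstar) - ρ ^ 2 ≤ ‖g‖ ^ 2 := by
    nlinarith [pow_le_pow_left₀ (norm_nonneg _) hgrad 2, add_sq_le (a := ‖g‖) (b := ρ)]
  have ht₀ : 0 ≤ t := htmin.trans htl
  calc f (x - t • g) - fstar ≤ (f x - fstar) - t / 2 * ‖g‖ ^ 2 := by linarith
    _ ≤ (f x - fstar) - t / 2 * (m * (f x - fstar) - ρ ^ 2) := by gcongr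
    _ = (1 - m * t / 2) * (f x - fstar) + ρ ^ 2 * t / 2 := by ring
    _ ≤ (1 - m * tmin / 2) * (f x - fstar) + ρ ^ 2 * tmax / 2 := by
      gcongr

theorem le_pow_mul_add_of_le_mul_add {e : ℕ → ℝ} {q b C : ℝ} (hq : 0 ≤ q) (hC₀ : 0 ≤ C)
    (hC : q * C + b = C) (h : ∀ k, e (k + 1) ≤ q * e k + b) (k : ℕ) :
    e k ≤ q ^ k * e 0 + C := by
  induction k with
  | zero => simpa using hC₀
  | succ k ih =>
    calc e (k + 1) ≤ q * e k + b := h k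
      _ ≤ q * (q ^ k * e 0 + C) + b := by gcongr
      _ = q ^ (k + 1) * e 0 + C := by linear_combination hC

theorem stmt_7_general {n : ℕ} (f : EuclideanSpace ℝ (Fin n) → ℝ) (m : ℝ) (hm : 0 < m)
    (hdiff : Differentiable ℝ f)
    (hconv : ConvexOn ℝ Set.univ (fun y => f y - m / 2 * ‖y‖ ^ 2))
    (xstar : EuclideanSpace ℝ (Fin n)) (hmin : ∀ y, f xstar ≤ f y)
    (ρ : ℝ)
    (tmin tmax : ℝ) (htmin : 0 < tmin) (htminmax : tmin ≤ tmax)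
    (htmin2 : tmin < 2 / m)
    (x : ℕ → EuclideanSpace ℝ (Fin n)) (g : ℕ → EuclideanSpace ℝ (Fin n)) (t : ℕ → ℝ)
    (hg : ∀ k, ‖g k - gradient f (x k)‖ ≤ ρ)
    (ht : ∀ k, t k ∈ Set.Icc tmin tmax)
    (hstep : ∀ k, x (k + 1) = x k - t k • g k)
    (harmijo : ∀ k, f (x k - t k • g k) ≤ f (x k) - t k / 2 * ‖g k‖ ^ 2) :
    ∀ k : ℕ, f (x k) - f xstar ≤
      (1 - m * tmin / 2) ^ k * (f (x 0) - f xstar) + ρ ^ 2 * tmax / (m * tmin) := by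
  have hrate : 0 ≤ 1 - m * tmin / 2 := by
    rw [lt_div_iff₀ hm] at htmin2
    linarith
  have hlimit : 0 ≤ ρ ^ 2 * tmax / (m * tmin) := by
    have := htmin.trans_le htminmax
    positivity
  refine le_pow_mul_add_of_le_mul_add (e := fun k => f (x k) - f xstar)
    (b := ρ ^ 2 * tmax / 2) hrate hlimit ?_ fun k => ?_
  · field_simp
    ring
  · rw [hstep k]
    exact armijo_step_sub_le hm.le htmin.le (ht k) (hmin (x k))
      (two_mul_sub_le_norm_gradient_sq hconv hm (hdiff _) xstar) (hg k) (harmijo k)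

/-- Convergence of approximate-gradient descent with approximate Armijo step sizes in
`[t_min, t_max]` and gradient-approximation error at most `ρ`, on an `m`-strongly convex
function: `f(x_k) − f_* ≤ (1 − m t_min/2)^k (f(x_0) − f_*) + ρ² t_max/(m t_min)`. -/
theorem stmt_7 {n : ℕ} (f : EuclideanSpace ℝ (Fin n) → ℝ) (m : ℝ) (hm : 0 < m)
    (hdiff : Differentiable ℝ f)
    (hconv : ConvexOn ℝ Set.univ (fun y => f y - m / 2 * ‖y‖ ^ 2))
    (xstar : EuclideanSpace ℝ (Fin n)) (hmin : ∀ y, f xstar ≤ f y)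
    (ρ : ℝ) (hρ : 0 ≤ ρ)
    (tmin tmax : ℝ) (htmin : 0 < tmin) (htminmax : tmin ≤ tmax)
    (htmin2 : tmin < 2 / m)
    (x : ℕ → EuclideanSpace ℝ (Fin n)) (g : ℕ → EuclideanSpace ℝ (Fin n)) (t : ℕ → ℝ)
    (hg : ∀ k, ‖g k - gradient f (x k)‖ ≤ ρ)
    (ht : ∀ k, t k ∈ Set.Icc tmin tmax)
    (hstep : ∀ k, x (k + 1) = x k - t k • g k)
    (harmijo : ∀ k, f (x k - t k • g k) ≤ f (x k) - t k / 2 * ‖g k‖ ^ 2) :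
    ∀ k : ℕ, f (x k) - f xstar ≤
      (1 - m * tmin / 2) ^ k * (f (x 0) - f xstar) + ρ ^ 2 * tmax / (m * tmin) :=
  stmt_7_general f m hm hdiff hconv xstar hmin ρ tmin tmax htmin htminmax htmin2 x g t hg ht hstep
    harmijo
end

section
/- Let f : ℝⁿ → ℝ be convex and differentiable with L-Lipschitz gradient (L > 0). Let x ∈ ℝⁿ and let d ≠ 0 be a descent direction at x (⟨d, ∇f(x)⟩ < 0). If t₊ ∈ ℝ is a minimizer of t ↦ f(x + t d), then t₊ ≥ (−⟨d, ∇f(x)⟩)/(2 L ‖d‖²). -/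
/-!
Restrict `f` to the line `t ↦ x + t • d` and write `g₀ = ⟪d, ∇f(x)⟫ < 0`, `K = L‖d‖²`.
Convexity puts the restriction above its tangent at `0`, so `f(x + t₊ d) ≥ f(x) + t₊ g₀`; the
Lipschitz gradient puts it below the parabola `f(x) + t g₀ + K t² / 2` for `t ≥ 0`, whose minimum,
`f(x) - g₀² / (2K)` at `t = -g₀ / K`, bounds `f(x + t₊ d)` from above. Hence
`t₊ g₀ ≤ -g₀² / (2K)`, and dividing by `g₀ < 0` gives the claim.
-/

open Set
open scoped RealInnerProductSpace

lemma ConvexOn.add_mul_sub_le_of_hasDerivAt {S : Set ℝ} {φ : ℝ → ℝ} {φ' a b : ℝ}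
    (hφ : ConvexOn ℝ S φ) (ha : a ∈ S) (hb : b ∈ S) (hderiv : HasDerivAt φ φ' a) :
    φ a + φ' * (b - a) ≤ φ b := by
  rcases lt_trichotomy a b with hab | rfl | hba
  · have := hφ.le_slope_of_hasDerivAt ha hb hab hderiv
    rw [slope_def_field, le_div_iff₀ (sub_pos.2 hab)] at this
    linarith
  · simp
  · have := hφ.slope_le_of_hasDerivAt hb ha hba hderiv
    rw [slope_def_field, div_le_iff₀ (sub_pos.2 hba)] at this
    linarith

lemma le_add_mul_add_sq_of_deriv_sub_le {φ φ' : ℝ → ℝ} {K t : ℝ}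
    (hφ : ∀ s, HasDerivAt φ (φ' s) s) (hφ' : ∀ s, 0 ≤ s → φ' s - φ' 0 ≤ K * s) (ht : 0 ≤ t) :
    φ t ≤ φ 0 + φ' 0 * t + K / 2 * t ^ 2 := by
  set ψ : ℝ → ℝ := fun s => φ s - φ' 0 * s - K / 2 * s ^ 2
  have hψ : ∀ s, HasDerivAt ψ (φ' s - φ' 0 - K * s) s := fun s => by
    have hquad : HasDerivAt (fun s : ℝ => K / 2 * s ^ 2) (K * s) s := by
      simpa using ((hasDerivAt_pow 2 s).const_mul (K / 2)).congr_deriv (by ring)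
    exact (((hφ s).sub ((hasDerivAt_id' s).const_mul (φ' 0))).sub hquad).congr_deriv (by ring)
  have hanti : AntitoneOn ψ (Ici 0) := by
    refine antitoneOn_of_hasDerivWithinAt_nonpos (convex_Ici 0)
      (fun s _ => (hψ s).continuousAt.continuousWithinAt) (fun s _ => (hψ s).hasDerivWithinAt)
      fun s hs => ?_
    rw [interior_Ici] at hs
    linarith [hφ' s (le_of_lt hs)]
  have := hanti self_mem_Ici ht ht
  simp only [ψ] at this
  linarith

section InnerProductSpace

variable {E : Type*} [NormedAddCommGroup E] [InnerProductSpace ℝ E] [CompleteSpace E]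
  {f : E → ℝ} {g x d : E}

lemma HasGradientAt.hasDerivAt_comp_add_smul {t : ℝ} (hf : HasGradientAt f g (x + t • d)) :
    HasDerivAt (fun s : ℝ => f (x + s • d)) ⟪g, d⟫ t := by
  have hline : HasDerivAt (fun s : ℝ => x + s • d) d t := by
    simpa using ((hasDerivAt_id t).smul_const d).const_add x
  simpa [Function.comp_def, InnerProductSpace.toDual_apply_apply] using
    hf.hasFDerivAt.comp_hasDerivAt t hline

lemma ConvexOn.add_inner_sub_le_of_hasGradientAt (hconv : ConvexOn ℝ univ f)
    (hf : HasGradientAt f g x) (y : E) :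
    f x + ⟪g, y - x⟫ ≤ f y := by
  have hφ : ConvexOn ℝ univ (fun s : ℝ => f (x + s • (y - x))) := by
    simpa [Function.comp_def, AffineMap.lineMap_apply_module', add_comm] using
      hconv.comp_affineMap (AffineMap.lineMap x y)
  have hderiv : HasDerivAt (fun s : ℝ => f (x + s • (y - x))) ⟪g, y - x⟫ 0 :=
    HasGradientAt.hasDerivAt_comp_add_smul (by simpa using hf)
  simpa using hφ.add_mul_sub_le_of_hasDerivAt (mem_univ 0) (mem_univ 1) hderiv

variable {L : ℝ} (hlip : ∀ x y, ‖gradient f x - gradient f y‖ ≤ L * ‖x - y‖)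
include hlip

lemma inner_gradient_add_smul_sub_le {s : ℝ} (hs : 0 ≤ s) :
    ⟪gradient f (x + s • d), d⟫ - ⟪gradient f x, d⟫ ≤ L * ‖d‖ ^ 2 * s := by
  calc ⟪gradient f (x + s • d), d⟫ - ⟪gradient f x, d⟫
      = ⟪gradient f (x + s • d) - gradient f x, d⟫ := (inner_sub_left _ _ _).symm
    _ ≤ ‖gradient f (x + s • d) - gradient f x‖ * ‖d‖ := real_inner_le_norm _ _
    _ ≤ L * ‖(x + s • d) - x‖ * ‖d‖ := by gcongr; exact hlip _ _
    _ = L * ‖d‖ ^ 2 * s := by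
      rw [add_sub_cancel_left, norm_smul, Real.norm_of_nonneg hs]; ring

lemma Differentiable.apply_add_smul_le_of_lipschitz_gradient (hf : Differentiable ℝ f) {t : ℝ}
    (ht : 0 ≤ t) :
    f (x + t • d) ≤ f x + ⟪gradient f x, d⟫ * t + L * ‖d‖ ^ 2 / 2 * t ^ 2 := by
  simpa using le_add_mul_add_sq_of_deriv_sub_le
    (φ := fun s => f (x + s • d)) (φ' := fun s => ⟪gradient f (x + s • d), d⟫)
    (fun s => (hf _).hasGradientAt.hasDerivAt_comp_add_smul)
    (fun s hs => by simpa using inner_gradient_add_smul_sub_le hlip hs) ht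

end InnerProductSpace

theorem stmt_9_general {n : ℕ} (f : EuclideanSpace ℝ (Fin n) → ℝ) (L : ℝ) (hL : 0 < L)
    (hconv : ConvexOn ℝ Set.univ f)
    (hdiff : Differentiable ℝ f)
    (hlip : ∀ x y, ‖gradient f x - gradient f y‖ ≤ L * ‖x - y‖)
    (x d : EuclideanSpace ℝ (Fin n))
    (hdesc : ⟪d, gradient f x⟫ < 0)
    (tplus : ℝ) (htplus : ∀ t : ℝ, f (x + tplus • d) ≤ f (x + t • d)) :
    -⟪d, gradient f x⟫ / (2 * L * ‖d‖ ^ 2) ≤ tplus := by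
  have hd : d ≠ 0 := by rintro rfl; simp at hdesc
  have hK : 0 < L * ‖d‖ ^ 2 := by positivity
  have tangent := hconv.add_inner_sub_le_of_hasGradientAt (hdiff x).hasGradientAt (x + tplus • d)
  rw [add_sub_cancel_left, inner_smul_right, real_inner_comm d] at tangent
  have parabola := hdiff.apply_add_smul_le_of_lipschitz_gradient hlip (x := x) (d := d)
    (div_nonneg (neg_nonneg.2 hdesc.le) hK.le)
  rw [real_inner_comm d] at parabola
  set g₀ := ⟪d, gradient f x⟫
  set K := L * ‖d‖ ^ 2
  have hdrop : tplus * g₀ ≤ -g₀ ^ 2 / (2 * K) := by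
    have := (tangent.trans (htplus _)).trans parabola
    field_simp at this ⊢
    linarith
  rw [show 2 * L * ‖d‖ ^ 2 = 2 * K by ring, div_le_iff₀ (by positivity)]
  rw [le_div_iff₀ (by positivity)] at hdrop
  nlinarith

/-- Lower bound on the exact line search minimizer along a descent direction for a convex
function with `L`-Lipschitz gradient: `t₊ ≥ −⟨d, ∇f(x)⟩/(2 L ‖d‖²)`. -/
theorem stmt_9 {n : ℕ} (f : EuclideanSpace ℝ (Fin n) → ℝ) (L : ℝ) (hL : 0 < L)
    (hconv : ConvexOn ℝ Set.univ f)
    (hdiff : Differentiable ℝ f)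
    (hlip : ∀ x y, ‖gradient f x - gradient f y‖ ≤ L * ‖x - y‖)
    (x d : EuclideanSpace ℝ (Fin n)) (hd : d ≠ 0)
    (hdesc : ⟪d, gradient f x⟫ < 0)
    (tplus : ℝ) (htplus : ∀ t : ℝ, f (x + tplus • d) ≤ f (x + t • d)) :
    -⟪d, gradient f x⟫ / (2 * L * ‖d‖ ^ 2) ≤ tplus :=
  stmt_9_general f L hL hconv hdiff hlip x d hdesc tplus htplus
end
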